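/- arXiv:0803.0578 — 2 statements merged into one kernel-verified Lean document; each statement's English description precedes it below -/
import Mathlib

section
/- Let A be a commutative ring, M an A-module, and suppose the A-action on M is locally finite, meaning every element m ∈ M is contained in a finite-dimensional (over the base field) A-submodule, equivalently A·m is finite-dimensional. For a maximal ideal 𝔞 of A, let M^{(𝔞)} = { m ∈ M : 𝔞^ℓ · m = 0 for some ℓ ≥ 0 }. If M is locally finite and supported on finitely many maximal ideals, then M decomposes as the internal direct sum M = ⊕_𝔞 M^{(𝔞)} over maximal ideals 𝔞 of A, and each M^{(𝔞)} is an A-submodule. -/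
/-!
For `x ∈ M`, the cyclic module `A ∙ x ≅ A ⧸ ann(x)` is finite-dimensional over `k`, so `A ⧸ ann(x)`
is an Artinian ring. Its nilradical is nilpotent, and its `n`-th power is the intersection of the
`n`-th powers of the finitely many maximal ideals, so `ann(x)` contains `𝔞₁ⁿ ⊓ ⋯ ⊓ 𝔞ᵣⁿ` for distinct
maximal ideals `𝔞ᵢ` of `A`. These powers are pairwise coprime, so the Chinese remainder theorem
splits `x` into pieces killed by the `𝔞ᵢⁿ`. The same coprimality makes the primary components
independent.
-/

open Function Submodule Ideal

section

universe u v

variable {A : Type u} {M : Type v} [CommRing A] [AddCommGroup M] [Module A M]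

theorem Ideal.iSupIndep_primaryComponent_of_pairwise_isCoprime {ι : Type*} {p : ι → Ideal A}
    (hp : Pairwise (IsCoprime on p)) :
    iSupIndep fun i ↦ primaryComponent M (p i) := by
  rw [iSupIndep_iff_finsetSum_eq_zero_imp_eq_zero]
  intro s v hv hsum
  choose! e he using fun i hi ↦ (primaryComponent_mem _ _ _).mp (hv i hi)
  have hindep : iSupIndep fun i ↦ torsionBySet A M ↑(p i ^ s.sup e) := by
    rw [iSupIndep_iff_supIndep]
    exact fun _ ↦ supIndep_torsionBySet_ideal fun i _ j _ hij ↦ (hp hij).pow.sup_eq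
  rw [iSupIndep_iff_finsetSum_eq_zero_imp_eq_zero] at hindep
  exact hindep s v
    (fun i hi ↦ torsionBySet_le_torsionBySet_pow _ _ (Finset.le_sup hi) _ (he i hi)) hsum

theorem Ideal.torsionBySet_iInf_pow_le_iSup_primaryComponent {ι : Type*} {p : ι → Ideal A}
    {s : Finset ι} (hp : Set.Pairwise ↑s (IsCoprime on p)) (n : ℕ) :
    torsionBySet A M ↑(⨅ i ∈ s, p i ^ n) ≤ ⨆ i, primaryComponent M (p i) := by
  rw [← iSup_torsionBySet_ideal_eq_torsionBySet_iInf fun i hi j hj hij ↦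
    (hp hi hj hij).pow.sup_eq]
  exact iSup₂_le fun i _ ↦ le_iSup_of_le i (le_iSup (fun n ↦ torsionBySet A M ↑(p i ^ n)) n)

theorem Ideal.exists_iInf_pow_le_of_isArtinianRing_quotient (I : Ideal A)
    [IsArtinianRing (A ⧸ I)] :
    ∃ (s : Finset (MaximalSpectrum A)) (n : ℕ), ⨅ P ∈ s, P.asIdeal ^ n ≤ I := by
  classical
  have := Fintype.ofFinite (MaximalSpectrum (A ⧸ I))
  let lift (Q : MaximalSpectrum (A ⧸ I)) : MaximalSpectrum A :=
    ⟨Q.asIdeal.comap (Quotient.mk I), comap_isMaximal_of_surjective _ Quotient.mk_surjective⟩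
  obtain ⟨n, hn⟩ := IsArtinianRing.isNilpotent_nilradical (R := A ⧸ I)
  refine ⟨Finset.univ.image lift, n, ?_⟩
  calc ⨅ P ∈ Finset.univ.image lift, P.asIdeal ^ n
      ≤ ⨅ Q, Q.asIdeal.comap (Quotient.mk I) ^ n :=
        le_iInf fun Q ↦ iInf₂_le (lift Q) (Finset.mem_image_of_mem _ (Finset.mem_univ Q))
    _ ≤ ⨅ Q, (Q.asIdeal ^ n).comap (Quotient.mk I) := iInf_mono fun Q ↦ le_comap_pow _ n
    _ = I := by
      rw [← comap_iInf, ← IsArtinianRing.nilradical_pow_eq_iInf, hn, zero_eq_bot,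
        ← RingHom.ker_eq_comap_bot, mk_ker]

theorem Submodule.isArtinianRing_quotient_torsionOf (k : Type*) [Field k] [Algebra k A]
    [Module k M] [IsScalarTower k A M] (x : M)
    (hx : FiniteDimensional k ((span A {x}).restrictScalars k)) :
    IsArtinianRing (A ⧸ torsionOf A M x) :=
  have : FiniteDimensional k (A ⧸ torsionOf A M x) :=
    Module.Finite.equiv (((restrictScalarsEquiv k A M (span A {x})).restrictScalars k).trans
      ((quotTorsionOfEquivSpanSingleton A M x).restrictScalars k).symm)
  IsArtinianRing.of_finite k _

end

theorem spectral_decomposition_general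
    {k : Type*} [Field k]
    {A : Type*} [CommRing A] [Algebra k A]
    [DecidableEq (MaximalSpectrum A)]
    {M : Type*} [AddCommGroup M] [Module A M] [Module k M] [IsScalarTower k A M]
    (hlf : ∀ m : M,
      FiniteDimensional k ((Submodule.span A {m}).restrictScalars k)) :
    ∃ N : MaximalSpectrum A → Submodule A M,
      (∀ 𝔞 : MaximalSpectrum A,
        (N 𝔞 : Set M) = {m : M | ∃ ℓ : ℕ, ∀ a ∈ 𝔞.asIdeal ^ ℓ, a • m = 0}) ∧
      DirectSum.IsInternal N := by
  refine ⟨fun 𝔞 ↦ primaryComponent M 𝔞.asIdeal, fun 𝔞 ↦ ?_, ?_⟩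
  · ext m
    simp [primaryComponent_mem, mem_torsionBySet_iff]
  have hcoprime : Pairwise (IsCoprime on MaximalSpectrum.asIdeal (R := A)) :=
    fun _ _ ↦ MaximalSpectrum.isCoprime_of_ne
  rw [DirectSum.isInternal_submodule_iff_iSupIndep_and_iSup_eq_top]
  refine ⟨iSupIndep_primaryComponent_of_pairwise_isCoprime hcoprime, eq_top_iff.mpr fun x _ ↦ ?_⟩
  have := isArtinianRing_quotient_torsionOf k x (hlf x)
  obtain ⟨s, n, hs⟩ := exists_iInf_pow_le_of_isArtinianRing_quotient (torsionOf A M x)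
  exact torsionBySet_iInf_pow_le_iSup_primaryComponent (hcoprime.set_pairwise _) n
    ((mem_torsionBySet_iff _ x).mpr fun a ↦ (mem_torsionOf_iff x a.1).mp (hs a.2))

/-- Let `A` be a finitely generated commutative algebra over an
algebraically closed field `k`, and `M` an `A`-module whose `A`-action is locally
finite: every `m ∈ M` generates a finite-dimensional (over `k`) `A`-submodule.
For a maximal ideal `𝔞` of `A` set `M^{(𝔞)} = {m ∈ M : 𝔞^ℓ · m = 0 for some ℓ}`.
If `M` is locally finite and supported on finitely many maximal ideals, then each
`M^{(𝔞)}` is an `A`-submodule and `M` is the internal direct sum `⊕_𝔞 M^{(𝔞)}`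
over the maximal ideals of `A`. -/
theorem spectral_decomposition
    {k : Type*} [Field k] [IsAlgClosed k]
    {A : Type*} [CommRing A] [Algebra k A] [Algebra.FiniteType k A]
    [DecidableEq (MaximalSpectrum A)]
    {M : Type*} [AddCommGroup M] [Module A M] [Module k M] [IsScalarTower k A M]
    (hlf : ∀ m : M,
      FiniteDimensional k ((Submodule.span A {m}).restrictScalars k))
    (hsupp : {𝔞 : MaximalSpectrum A |
        ∃ m : M, m ≠ 0 ∧ ∃ ℓ : ℕ, ∀ a ∈ 𝔞.asIdeal ^ ℓ, a • m = 0}.Finite) :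
    ∃ N : MaximalSpectrum A → Submodule A M,
      (∀ 𝔞 : MaximalSpectrum A,
        (N 𝔞 : Set M) = {m : M | ∃ ℓ : ℕ, ∀ a ∈ 𝔞.asIdeal ^ ℓ, a • m = 0}) ∧
      DirectSum.IsInternal N :=
  spectral_decomposition_general hlf
end

section
/- Let R be a commutative ring and f_1, ..., f_m ∈ R a regular sequence. Then the Koszul complex K(f_1,...,f_m): 0 → R ⊗ Λ^m(C^m) → ... → R ⊗ Λ^1(C^m) → R → 0, with differential determined by the f_i, is a free resolution of R/(f_1,...,f_m); that is, its homology vanishes in positive degrees and equals R/(f_1,...,f_m) in degree zero. -/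
noncomputable section

/-- The terms of the Koszul complex of `m` elements of `R`:
`K p = R ⊗ Λ^p(ℂ^m)` is realized as the free `R`-module on the set of
`p`-element subsets of `{1, ..., m}`. -/
def KoszulTerm (R : Type*) (m p : ℕ) := {s : Finset (Fin m) // s.card = p} → R

/-- The Koszul differential `K(p+1) → K p` determined by `f₁, ..., f_m`:
`e_{i₁} ∧ ... ∧ e_{i_{p+1}} ↦ Σ_j (−1)^{j−1} f_{i_j} · e_{i₁} ∧ ... ∧ ê_{i_j} ∧ ...`. -/
def koszulD {R : Type*} [CommRing R] {m : ℕ} (f : Fin m → R) (p : ℕ)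
    (x : KoszulTerm R m (p + 1)) : KoszulTerm R m p :=
  fun t => ∑ i : Fin m,
    if h : i ∉ t.1 then
      (-1 : R) ^ ((t.1.filter (fun j => j < i)).card) * f i *
        x ⟨insert i t.1, by rw [Finset.card_insert_of_notMem h, t.2]⟩
    else 0

/-!
Induction on `m`. Splitting the basis of `K(f₁, …, f_{m+1})` into the wedges that avoid and
those that contain `e_{m+1}` exhibits it as the mapping cone of `± f_{m+1}` on
`K(f₁, …, f_m)`. Write a cycle as `x = x' + x'' ∧ e_{m+1}`. In positive degree `x''` is a
cycle of the smaller complex, hence a boundary `d c`; in degree zero `f_{m+1} x''` lies in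
`(f₁, …, f_m)`, and regularity of `f_{m+1}` modulo that ideal gives the same conclusion. Then
`x' ∓ f_{m+1} c` is a cycle of the smaller complex, hence a boundary `d a`, and
`x = d (a + c ∧ e_{m+1})`.
-/

namespace Finset

variable {m : ℕ}

def preimageCastSucc (s : Finset (Fin (m + 1))) : Finset (Fin m) :=
  s.preimage Fin.castSuccEmb Fin.castSuccEmb.injective.injOn

@[simp] lemma preimageCastSucc_map (t : Finset (Fin m)) :
    (t.map Fin.castSuccEmb).preimageCastSucc = t :=
  preimage_map _ _

lemma map_preimageCastSucc (s : Finset (Fin (m + 1))) :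
    s.preimageCastSucc.map Fin.castSuccEmb = s.erase (Fin.last m) := by
  ext j
  induction j using Fin.lastCases <;>
    simp [preimageCastSucc, Fin.castSucc_ne_last]

lemma last_notMem_map_castSuccEmb (t : Finset (Fin m)) : Fin.last m ∉ t.map Fin.castSuccEmb := by
  simp [Fin.castSucc_ne_last]

@[simp] lemma preimageCastSucc_insert_last (t : Finset (Fin m)) :
    (insert (Fin.last m) (t.map Fin.castSuccEmb)).preimageCastSucc = t := by
  ext i
  simp [preimageCastSucc, Fin.castSucc_ne_last]

lemma card_preimageCastSucc (s : Finset (Fin (m + 1))) :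
    s.preimageCastSucc.card = (s.erase (Fin.last m)).card := by
  rw [← map_preimageCastSucc, card_map]

lemma card_filter_map_castSuccEmb_lt (t : Finset (Fin m)) (i : Fin m) :
    ((t.map Fin.castSuccEmb).filter (· < i.castSucc)).card = (t.filter (· < i)).card := by
  simp [filter_map, Function.comp_def]

end Finset

namespace KoszulTerm

variable {R : Type*} {m p : ℕ}

lemma ext_zero {x y : KoszulTerm R m 0}
    (h : x ⟨∅, Finset.card_empty⟩ = y ⟨∅, Finset.card_empty⟩) : x = y :=
  funext fun ⟨t, ht⟩ => by
    obtain rfl := Finset.card_eq_zero.mp ht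
    exact h

def omitLast (x : KoszulTerm R (m + 1) p) : KoszulTerm R m p :=
  fun t => x ⟨t.1.map Fin.castSuccEmb, by rw [Finset.card_map, t.2]⟩

def withLast (x : KoszulTerm R (m + 1) (p + 1)) : KoszulTerm R m p :=
  fun t => x ⟨insert (Fin.last m) (t.1.map Fin.castSuccEmb), by
    rw [Finset.card_insert_of_notMem (Finset.last_notMem_map_castSuccEmb _), Finset.card_map,
      t.2]⟩

def glue (a : KoszulTerm R m (p + 1)) (b : KoszulTerm R m p) : KoszulTerm R (m + 1) (p + 1) :=
  fun s => if h : Fin.last m ∈ s.1 then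
      b ⟨s.1.preimageCastSucc, by
        rw [Finset.card_preimageCastSucc, Finset.card_erase_of_mem h, s.2, Nat.add_sub_cancel]⟩
    else a ⟨s.1.preimageCastSucc, by
        rw [Finset.card_preimageCastSucc, Finset.erase_eq_of_notMem h, s.2]⟩

@[simp] lemma omitLast_glue (a : KoszulTerm R m (p + 1)) (b : KoszulTerm R m p) :
    omitLast (glue a b) = a :=
  funext fun t => by
    simp only [omitLast, glue, dif_neg (Finset.last_notMem_map_castSuccEmb t.1),
      Finset.preimageCastSucc_map]

@[simp] lemma withLast_glue (a : KoszulTerm R m (p + 1)) (b : KoszulTerm R m p) :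
    withLast (glue a b) = b :=
  funext fun t => by
    simp only [withLast, glue, dif_pos (Finset.mem_insert_self _ _),
      Finset.preimageCastSucc_insert_last]

lemma ext_omitLast_withLast {x y : KoszulTerm R (m + 1) (p + 1)}
    (h₁ : omitLast x = omitLast y) (h₂ : withLast x = withLast y) : x = y := by
  funext ⟨s, hs⟩
  by_cases h : Fin.last m ∈ s
  · obtain ⟨t, rfl⟩ : ∃ t, s = insert (Fin.last m) (t.map Fin.castSuccEmb) :=
      ⟨s.preimageCastSucc, by rw [Finset.map_preimageCastSucc, Finset.insert_erase h]⟩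
    rw [Finset.card_insert_of_notMem (Finset.last_notMem_map_castSuccEmb t), Finset.card_map,
      Nat.add_right_cancel_iff] at hs
    exact congrFun h₂ ⟨t, hs⟩
  · obtain ⟨t, rfl⟩ : ∃ t, s = t.map Fin.castSuccEmb :=
      ⟨s.preimageCastSucc, by rw [Finset.map_preimageCastSucc, Finset.erase_eq_of_notMem h]⟩
    rw [Finset.card_map] at hs
    exact congrFun h₁ ⟨t, hs⟩

variable [CommRing R]

instance : AddCommGroup (KoszulTerm R m p) := inferInstanceAs (AddCommGroup (_ → R))

instance : Module R (KoszulTerm R m p) := inferInstanceAs (Module R (_ → R))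

@[simp] lemma zero_apply (t : {s : Finset (Fin m) // s.card = p}) : (0 : KoszulTerm R m p) t = 0 :=
  rfl

@[simp] lemma omitLast_zero : omitLast (0 : KoszulTerm R (m + 1) p) = 0 :=
  rfl

@[simp] lemma withLast_zero : withLast (0 : KoszulTerm R (m + 1) (p + 1)) = 0 :=
  rfl

@[simp] lemma add_apply (x y : KoszulTerm R m p) (t : {s : Finset (Fin m) // s.card = p}) :
    (x + y) t = x t + y t :=
  rfl

@[simp] lemma sub_apply (x y : KoszulTerm R m p) (t : {s : Finset (Fin m) // s.card = p}) :
    (x - y) t = x t - y t :=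
  rfl

@[simp] lemma smul_apply (r : R) (x : KoszulTerm R m p) (t : {s : Finset (Fin m) // s.card = p}) :
    (r • x) t = r * x t :=
  rfl

end KoszulTerm

section Differential

variable {R : Type*} [CommRing R] {m : ℕ}

lemma koszulD_sub (f : Fin m → R) (p : ℕ) (x y : KoszulTerm R m (p + 1)) :
    koszulD f p (x - y) = koszulD f p x - koszulD f p y := by
  funext t
  rw [KoszulTerm.sub_apply]
  simp only [koszulD, KoszulTerm.sub_apply, ← Finset.sum_sub_distrib]
  refine Finset.sum_congr rfl fun i _ => ?_
  split_ifs <;> ring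

lemma koszulD_smul (f : Fin m → R) (p : ℕ) (r : R) (x : KoszulTerm R m (p + 1)) :
    koszulD f p (r • x) = r • koszulD f p x := by
  funext t
  rw [KoszulTerm.smul_apply]
  simp only [koszulD, KoszulTerm.smul_apply, Finset.mul_sum]
  refine Finset.sum_congr rfl fun i _ => ?_
  split_ifs <;> ring

lemma koszulD_zero_apply (f : Fin m → R) (x : KoszulTerm R m 1) :
    koszulD f 0 x ⟨∅, Finset.card_empty⟩ =
      ∑ i, x ⟨{i}, Finset.card_singleton i⟩ * f i := by
  refine Finset.sum_congr rfl fun i _ => ?_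
  rw [dif_pos (Finset.notMem_empty i)]
  simp [mul_comm]

lemma range_koszulD_zero (f : Fin m → R) :
    Set.range (fun x : KoszulTerm R m 1 => koszulD f 0 x ⟨∅, Finset.card_empty⟩) =
      Ideal.span (Set.range f) := by
  ext r
  simp only [Set.mem_range, koszulD_zero_apply, SetLike.mem_coe,
    Submodule.mem_span_range_iff_exists_fun, smul_eq_mul]
  constructor
  · rintro ⟨x, rfl⟩
    exact ⟨fun i => x ⟨{i}, Finset.card_singleton i⟩, rfl⟩
  · rintro ⟨c, rfl⟩
    exact ⟨fun s => ∑ i ∈ s.1, c i, by simp⟩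

end Differential

section Decomposition

variable {R : Type*} [CommRing R] {m : ℕ} (f : Fin (m + 1) → R)

lemma withLast_koszulD (p : ℕ) (x : KoszulTerm R (m + 1) (p + 2)) :
    (koszulD f (p + 1) x).withLast = koszulD (Fin.init f) p x.withLast := by
  funext ⟨u, hu⟩
  simp only [KoszulTerm.withLast, koszulD]
  rw [Fin.sum_univ_castSucc, dif_neg (not_not_intro (Finset.mem_insert_self _ _)), add_zero]
  refine Finset.sum_congr rfl fun i _ => ?_
  by_cases h : i ∈ u
  · rw [dif_neg (by simp [h]), dif_neg (not_not_intro h)]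
  · rw [dif_pos (by simp [h, Fin.castSucc_ne_last]), dif_pos h, Finset.filter_insert,
      if_neg (Fin.castSucc_lt_last i).not_gt, Finset.card_filter_map_castSuccEmb_lt]
    congr 2
    exact Subtype.ext ((Finset.insert_comm _ _ _).trans (congrArg _ (Finset.map_insert _ _ _).symm))

lemma omitLast_koszulD (p : ℕ) (x : KoszulTerm R (m + 1) (p + 1)) :
    (koszulD f p x).omitLast =
      koszulD (Fin.init f) p x.omitLast + ((-1) ^ p * f (Fin.last m)) • x.withLast := by
  funext ⟨t, ht⟩
  simp only [KoszulTerm.omitLast, KoszulTerm.withLast, koszulD, KoszulTerm.add_apply,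
    KoszulTerm.smul_apply]
  rw [Fin.sum_univ_castSucc]
  congr 1
  · refine Finset.sum_congr rfl fun i _ => ?_
    by_cases h : i ∈ t
    · rw [dif_neg (by simp [h]), dif_neg (not_not_intro h)]
    · rw [dif_pos (by simp [h]), dif_pos h, Finset.card_filter_map_castSuccEmb_lt]
      congr 2
      exact Subtype.ext (Finset.map_insert _ _ _).symm
  · rw [dif_pos (Finset.last_notMem_map_castSuccEmb t), Finset.filter_true_of_mem,
      Finset.card_map, ht]
    simp [Fin.castSucc_lt_last]

end Decomposition

lemma Ideal.ofList_ofFn {R : Type*} [Semiring R] {m : ℕ} (f : Fin m → R) :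
    Ideal.ofList (List.ofFn f) = Ideal.span (Set.range f) :=
  congrArg Ideal.span (Set.ext fun a => List.mem_ofFn' f a)

namespace RingTheory.Sequence

lemma isWeaklyRegular_ofFn_succ_iff {R : Type*} (M : Type*) [CommRing R] [AddCommGroup M]
    [Module R M] {m : ℕ} (f : Fin (m + 1) → R) :
    IsWeaklyRegular M (List.ofFn f) ↔ IsWeaklyRegular M (List.ofFn (Fin.init f)) ∧
      IsSMulRegular (M ⧸ (Ideal.span (Set.range (Fin.init f)) • ⊤ : Submodule R M))
        (f (Fin.last m)) := by
  rw [List.ofFn_succ', List.concat_eq_append, isWeaklyRegular_append_iff,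
    isWeaklyRegular_singleton_iff, Ideal.ofList_ofFn]
  rfl

end RingTheory.Sequence

section Exactness

open RingTheory.Sequence

variable {R : Type*} [CommRing R] {m : ℕ}

def KoszulAcyclic (f : Fin m → R) : Prop :=
  ∀ p (x : KoszulTerm R m (p + 1)), koszulD f p x = 0 → ∃ y, koszulD f (p + 1) y = x

lemma exists_koszulD_eq_of_withLast_eq {f : Fin (m + 1) → R}
    (hexact : KoszulAcyclic (Fin.init f))
    {p : ℕ} {x : KoszulTerm R (m + 1) (p + 1)} (hx : koszulD f p x = 0)
    {c : KoszulTerm R m (p + 1)} (hc : koszulD (Fin.init f) p c = x.withLast) :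
    ∃ y, koszulD f (p + 1) y = x := by
  have hcycle :
      koszulD (Fin.init f) p (x.omitLast - ((-1) ^ (p + 1) * f (Fin.last m)) • c) = 0 := by
    funext t
    have h := congrFun (omitLast_koszulD f p x) t
    rw [hx, KoszulTerm.omitLast_zero] at h
    rw [koszulD_sub, koszulD_smul, hc]
    simp only [KoszulTerm.sub_apply, KoszulTerm.smul_apply, KoszulTerm.add_apply,
      KoszulTerm.zero_apply] at h ⊢
    linear_combination -h
  obtain ⟨a, ha⟩ := hexact p _ hcycle
  refine ⟨KoszulTerm.glue a c, KoszulTerm.ext_omitLast_withLast ?_ ?_⟩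
  · rw [omitLast_koszulD, KoszulTerm.omitLast_glue, KoszulTerm.withLast_glue, ha, sub_add_cancel]
  · rw [withLast_koszulD, KoszulTerm.withLast_glue, hc]

lemma exists_koszulD_eq_withLast {f : Fin (m + 1) → R}
    (hreg : IsSMulRegular (R ⧸ Ideal.span (Set.range (Fin.init f))) (f (Fin.last m)))
    (hexact : KoszulAcyclic (Fin.init f))
    {p : ℕ} {x : KoszulTerm R (m + 1) (p + 1)} (hx : koszulD f p x = 0) :
    ∃ c, koszulD (Fin.init f) p c = x.withLast := by
  cases p with
  | succ q => exact hexact q _ (by rw [← withLast_koszulD, hx, KoszulTerm.withLast_zero])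
  | zero =>
    have hmem : koszulD (Fin.init f) 0 x.omitLast ⟨∅, Finset.card_empty⟩ ∈
        Ideal.span (Set.range (Fin.init f)) := by
      rw [← SetLike.mem_coe, ← range_koszulD_zero]
      exact ⟨_, rfl⟩
    have hsmul : f (Fin.last m) • x.withLast ⟨∅, Finset.card_empty⟩ ∈
        Ideal.span (Set.range (Fin.init f)) := by
      have h := congrFun (omitLast_koszulD f 0 x) ⟨∅, Finset.card_empty⟩
      rw [hx, KoszulTerm.omitLast_zero] at h
      simp only [KoszulTerm.add_apply, KoszulTerm.smul_apply, KoszulTerm.zero_apply, pow_zero,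
        one_mul] at h
      rw [smul_eq_mul, show f (Fin.last m) * _ = _ from eq_neg_of_add_eq_zero_right h.symm]
      exact neg_mem hmem
    obtain ⟨c, hc⟩ : x.withLast ⟨∅, Finset.card_empty⟩ ∈
        Set.range fun c : KoszulTerm R m 1 =>
          koszulD (Fin.init f) 0 c ⟨∅, Finset.card_empty⟩ := by
      rw [range_koszulD_zero]
      exact mem_of_isSMulRegular_quotient_of_smul_mem hreg hsmul
    exact ⟨c, KoszulTerm.ext_zero hc⟩

theorem koszulAcyclic_of_isWeaklyRegular (f : Fin m → R)
    (hf : IsWeaklyRegular R (List.ofFn f)) : KoszulAcyclic f := by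
  induction m with
  | zero =>
    refine fun p x _ => ⟨0, funext fun ⟨t, ht⟩ => ?_⟩
    simp [Finset.eq_empty_of_isEmpty t] at ht
  | succ m ih =>
    obtain ⟨hinit, hlast⟩ := (isWeaklyRegular_ofFn_succ_iff R f).1 hf
    rw [smul_eq_mul, Ideal.mul_top] at hlast
    have hexact := ih (Fin.init f) hinit
    intro p x hx
    obtain ⟨c, hc⟩ := exists_koszulD_eq_withLast hlast hexact hx
    exact exists_koszulD_eq_of_withLast_eq hexact hx hc

end Exactness

/-- Let `f₁, ..., f_m` be a regular sequence in a commutative ring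
`R`.  Then the Koszul complex `0 → R ⊗ Λ^m → ... → R ⊗ Λ^1 → R → 0` is a free
resolution of `R/(f₁,...,f_m)`: its homology vanishes in positive degrees (every
cycle in degree `p ≥ 1` is a boundary), and in degree zero it equals
`R/(f₁,...,f_m)` (the image of `K 1 → K 0 = R` is exactly the ideal
`(f₁, ..., f_m)`). -/
theorem koszul_complex_resolution {R : Type*} [CommRing R] {m : ℕ}
    (f : Fin m → R) (hreg : RingTheory.Sequence.IsRegular R (List.ofFn f)) :
    (∀ (p : ℕ) (x : KoszulTerm R m (p + 1)),
        (∀ t, koszulD f p x t = 0) → ∃ y : KoszulTerm R m (p + 2), koszulD f (p + 1) y = x) ∧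
    (Set.range (fun x : KoszulTerm R m 1 =>
        koszulD f 0 x ⟨∅, Finset.card_empty⟩) = ↑(Ideal.span (Set.range f))) :=
  ⟨fun p x hx => koszulAcyclic_of_isWeaklyRegular f hreg.toIsWeaklyRegular p x (funext hx),
    range_koszulD_zero f⟩

end
end
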